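/- Let δ ∈ (0,1) and let J > L > 0 be real constants. Define M(x) = (δ − 1) + (2−δ)·J/(δx) + (1−δ)·L/(δx) − 2(1−δ)·J·L/(δ²x²) for x > 0. Then M is strictly decreasing on [2J/δ, ∞), M(2J/δ) = δ/2, and M(x) → δ − 1 < 0 as x → ∞; consequently M has a unique zero in (2J/δ, ∞). -/

import Mathlib

/-!
Writing `A = ((2−δ)J + (1−δ)L)/δ` and `B = 2(1−δ)JL/δ²`, we have `M(x) = (δ−1) + A/x − B/x²`.
For `a ≤ x < y` one gets `M(x) − M(y) = (y−x)(Axy − B(x+y))/(x²y²)`, which is positive as soon as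
`2B ≤ Aa`; at `a = 2J/δ` this reduces to `(1−δ)L ≤ (2−δ)J`. The unique zero then comes from the
intermediate value theorem between `M(2J/δ) = δ/2 > 0` and the negative limit `δ − 1`.
-/

open Real Filter

/-- `M(x) = (δ−1) + (2−δ)·J/(δx) + (1−δ)·L/(δx) − 2(1−δ)·J·L/(δ²x²)`. -/
noncomputable def Mfun (δ J L x : ℝ) : ℝ :=
  (δ - 1) + (2 - δ) * J / (δ * x) + (1 - δ) * L / (δ * x) -
    2 * (1 - δ) * J * L / (δ ^ 2 * x ^ 2)

open Set

theorem StrictAntiOn.existsUnique_mem_Ioi_eq_of_tendsto {α β : Type*}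
    [ConditionallyCompleteLinearOrder α] [TopologicalSpace α] [OrderTopology α] [DenselyOrdered α]
    [LinearOrder β] [TopologicalSpace β] [OrderClosedTopology β]
    {f : α → β} {a : α} {c l : β} (hf : StrictAntiOn f (Ici a)) (hcont : ContinuousOn f (Ici a))
    (hac : c < f a) (hl : Tendsto f atTop (nhds l)) (hlc : l < c) :
    ∃! x, x ∈ Ioi a ∧ f x = c := by
  have : Nonempty α := ⟨a⟩
  obtain ⟨b, hab, hbc⟩ :=
    ((eventually_ge_atTop a).and (hl.eventually (eventually_lt_nhds hlc))).exists
  obtain ⟨x, hx, hxc⟩ := intermediate_value_Icc' hab (hcont.mono Icc_subset_Ici_self)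
    ⟨hbc.le, hac.le⟩
  have hax : a < x := hx.1.lt_of_ne (by rintro rfl; exact hac.ne' hxc)
  refine ⟨x, ⟨hax, hxc⟩, fun y ⟨hay, hyc⟩ => ?_⟩
  exact hf.injOn (mem_Ici.2 hay.le) (mem_Ici.2 hax.le) (hyc.trans hxc.symm)

section InverseQuadratic

variable (c A B : ℝ)

theorem continuousOn_const_add_div_sub_div_sq :
    ContinuousOn (fun x : ℝ => c + A / x - B / x ^ 2) (Ioi 0) := by
  intro x hx
  have hx0 : x ≠ 0 := (mem_Ioi.1 hx).ne'
  fun_prop (disch := positivity)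

theorem tendsto_const_add_div_sub_div_sq_atTop :
    Tendsto (fun x : ℝ => c + A / x - B / x ^ 2) atTop (nhds c) := by
  have hA := (tendsto_const_nhds (x := A)).div_atTop tendsto_id
  have hB := (tendsto_const_nhds (x := B)).div_atTop (tendsto_pow_atTop two_ne_zero)
  simpa using (tendsto_const_nhds.add hA).sub hB

variable {c A B}

theorem strictAntiOn_const_add_div_sub_div_sq {a : ℝ} (ha : 0 < a) (hB : 0 < B)
    (hAB : 2 * B ≤ A * a) :
    StrictAntiOn (fun x : ℝ => c + A / x - B / x ^ 2) (Ici a) := by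
  intro x (hx : a ≤ x) y _ hxy
  have hx0 : 0 < x := ha.trans_le hx
  have hy0 : 0 < y := hx0.trans hxy
  have hA : 0 < A := pos_of_mul_pos_left (by linarith) ha.le
  have hdiff : (c + A / x - B / x ^ 2) - (c + A / y - B / y ^ 2) =
      (y - x) * (A * x * y - B * (x + y)) / (x ^ 2 * y ^ 2) := by
    field_simp
    ring
  have hpos : B * (x + y) < A * x * y :=
    calc B * (x + y) < 2 * B * y := by nlinarith
      _ ≤ A * a * y := by gcongr
      _ ≤ A * x * y := by gcongr
  have : 0 < (y - x) * (A * x * y - B * (x + y)) / (x ^ 2 * y ^ 2) :=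
    div_pos (mul_pos (sub_pos.2 hxy) (sub_pos.2 hpos)) (by positivity)
  linarith

end InverseQuadratic

theorem Mfun_eq (δ J L : ℝ) :
    Mfun δ J L = fun x => (δ - 1) + ((2 - δ) * J + (1 - δ) * L) / δ / x -
      2 * (1 - δ) * J * L / δ ^ 2 / x ^ 2 := by
  funext x
  unfold Mfun
  ring

/-- For `δ ∈ (0,1)` and `J > L > 0`, the function `M` is strictly decreasing on
`[2J/δ, ∞)`, `M(2J/δ) = δ/2`, `M(x) → δ − 1 < 0` as `x → ∞`, and consequently
`M` has a unique zero in `(2J/δ, ∞)`. -/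
theorem stmt15 (δ J L : ℝ) (hδ : δ ∈ Set.Ioo (0 : ℝ) 1) (hL : 0 < L) (hJL : L < J) :
    StrictAntiOn (Mfun δ J L) (Set.Ici (2 * J / δ)) ∧
    Mfun δ J L (2 * J / δ) = δ / 2 ∧
    Filter.Tendsto (Mfun δ J L) Filter.atTop (nhds (δ - 1)) ∧
    δ - 1 < 0 ∧
    ∃! x, x ∈ Set.Ioi (2 * J / δ) ∧ Mfun δ J L x = 0 := by
  obtain ⟨hδ0, hδ1⟩ := hδ
  have hJ : 0 < J := hL.trans hJL
  have hδ1' : 0 < 1 - δ := sub_pos.2 hδ1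
  have ha : 0 < 2 * J / δ := by positivity
  have hgap :
      2 * (2 * (1 - δ) * J * L / δ ^ 2) ≤ ((2 - δ) * J + (1 - δ) * L) / δ * (2 * J / δ) := by
    rw [div_mul_div_comm, ← mul_div_assoc, ← sq, div_le_div_iff_of_pos_right (by positivity)]
    have hkey : (1 - δ) * L < (2 - δ) * J := by nlinarith
    nlinarith [mul_lt_mul_of_pos_left hkey hJ]
  have hanti : StrictAntiOn (Mfun δ J L) (Ici (2 * J / δ)) := by
    rw [Mfun_eq]
    exact strictAntiOn_const_add_div_sub_div_sq ha (by positivity) hgap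
  have hval : Mfun δ J L (2 * J / δ) = δ / 2 := by
    unfold Mfun
    field_simp
    ring
  have hlim : Tendsto (Mfun δ J L) atTop (nhds (δ - 1)) := by
    rw [Mfun_eq]
    exact tendsto_const_add_div_sub_div_sq_atTop _ _ _
  have hcont : ContinuousOn (Mfun δ J L) (Ici (2 * J / δ)) := by
    rw [Mfun_eq]
    exact (continuousOn_const_add_div_sub_div_sq _ _ _).mono fun _ hx =>
      ha.trans_le hx
  have hlim_neg : δ - 1 < 0 := by linarith
  refine ⟨hanti, hval, hlim, hlim_neg, ?_⟩
  refine hanti.existsUnique_mem_Ioi_eq_of_tendsto hcont ?_ hlim hlim_neg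
  rw [hval]
  positivity
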